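/- For every set of existential rules 𝓡, the edge set of PG^U(𝓡) is contained in the edge set of PG^D(𝓡), which is contained in the edge set of PG^F(𝓡). Furthermore, if the transitive closure of the graph of rule dependencies GRD(𝓡) is a complete graph, then PG^D(𝓡) = PG^F(𝓡). -/

import Mathlib

/-! ## Syntax: terms, atoms, existential rules -/

/-- Terms: variables or constants. -/
inductive Term where
  | var : ℕ → Term
  | const : ℕ → Term
deriving DecidableEq, Inhabited

/-- An atom `p(t₁,…,t_k)`: a predicate symbol together with a list of argument terms. -/
structure Atom where
  pred : ℕ
  args : List Term
deriving DecidableEq, Inhabited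

/-- The set of variables occurring in a (finite) list of atoms. -/
def varsOf (A : List Atom) : Set ℕ := {v | ∃ a ∈ A, Term.var v ∈ a.args}

/-- An existential rule `B → H`, given by its body and its head (finite atomsets,
represented as lists). -/
structure Rule where
  body : List Atom
  head : List Atom
deriving DecidableEq, Inhabited

def listToSet (l : List Atom) : Set Atom := {a | a ∈ l}

def Rule.bodySet (R : Rule) : Set Atom := listToSet R.body
def Rule.headSet (R : Rule) : Set Atom := listToSet R.head

/-- Frontier variables of a rule: the variables occurring in both body and head. -/
def Rule.frontierVars (R : Rule) : Set ℕ := varsOf R.body ∩ varsOf R.head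

/-- Existential variables of a rule: the variables occurring only in the head. -/
def Rule.existVars (R : Rule) : Set ℕ := varsOf R.head \ varsOf R.body

/-! ## Substitutions, homomorphisms and rule applications -/

/-- A substitution maps variables to terms. -/
abbrev Subst := ℕ → Term

def Subst.app (σ : Subst) : Term → Term
  | .var v => σ v
  | .const c => .const c

def Subst.atom (σ : Subst) (a : Atom) : Atom := ⟨a.pred, a.args.map (Subst.app σ)⟩

def Subst.set (σ : Subst) (A : Set Atom) : Set Atom := Subst.atom σ '' A

/-- `σ` is a homomorphism from the atomset `A` to the atomset `B`. -/
def IsHom (σ : Subst) (A B : Set Atom) : Prop := Subst.set σ A ⊆ B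

def varOccursIn (v : ℕ) (F : Set Atom) : Prop := ∃ a ∈ F, Term.var v ∈ a.args

def occursInSet (x : ℕ) (A : Set Atom) : Prop := ∃ a ∈ A, Term.var x ∈ a.args

/-- `F'` is the result `α(F,R,π)` of applying the rule `R` to the atomset `F` according to
the homomorphism `π` from the body of `R` to `F`; the substitution `π'` extends `π` by
mapping the existential variables of `R` to fresh variables (not occurring in `F`),
pairwise distinct. -/
def IsApplicationWith (F : Set Atom) (R : Rule) (π π' : Subst) (F' : Set Atom) : Prop :=
  IsHom π R.bodySet F ∧
  (∀ v ∈ varsOf R.body, π' v = π v) ∧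
  (∀ v ∈ R.existVars, ∃ w, π' v = Term.var w ∧ ¬ varOccursIn w F) ∧
  Set.InjOn π' R.existVars ∧
  F' = F ∪ Subst.set π' R.headSet

def IsApplication (F : Set Atom) (R : Rule) (π : Subst) (F' : Set Atom) : Prop :=
  ∃ π', IsApplicationWith F R π π' F'

/-- A homomorphism `π` from the body of `R` to `F` is useful if it cannot be extended to a
homomorphism from `body ∪ head` to `F`. -/
def Useful (π : Subst) (R : Rule) (F : Set Atom) : Prop :=
  ¬ ∃ σ : Subst, (∀ v ∈ varsOf R.body, σ v = π v) ∧ IsHom σ (R.bodySet ∪ R.headSet) F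

/-- `R₂` depends on `R₁` : there is an atomset `F` such that `R₁` is applicable to `F`
according to some homomorphism and `R₂` is applicable to the result according to a new
useful homomorphism. -/
def RuleDependsOn (R₂ R₁ : Rule) : Prop :=
  ∃ F : Set Atom, F.Finite ∧ ∃ π F', IsApplication F R₁ π F' ∧
    ∃ π₂, IsHom π₂ R₂.bodySet F' ∧ ¬ (Subst.set π₂ R₂.bodySet ⊆ F) ∧ Useful π₂ R₂ F'

/-- Edge of the graph of rule dependencies GRD(𝓡): from `R₁` to `R₂` iff `R₂` depends
on `R₁`. -/
def grdEdge (𝓡 : Set Rule) (R₁ R₂ : Rule) : Prop := R₁ ∈ 𝓡 ∧ R₂ ∈ 𝓡 ∧ RuleDependsOn R₂ R₁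

/-! ## Position graphs -/

/-- A position `[a,i]` in the body or the head of a rule. -/
structure PosNode where
  rule : Rule
  inHead : Bool
  atom : Atom
  idx : ℕ
deriving DecidableEq, Inhabited

def PosNode.term (n : PosNode) : Term := n.atom.args.getD n.idx default

def PosNode.valid (𝓡 : Set Rule) (n : PosNode) : Prop :=
  n.rule ∈ 𝓡 ∧ (if n.inHead then n.atom ∈ n.rule.head else n.atom ∈ n.rule.body) ∧
  n.idx < n.atom.args.length

/-- An existential position: a head position holding an existential variable. -/
def PosNode.isExistential (n : PosNode) : Prop :=
  n.inHead = true ∧ ∃ v ∈ n.rule.existVars, n.term = Term.var v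

/-- A frontier position: a body position holding a frontier variable. -/
def PosNode.isFrontier (n : PosNode) : Prop :=
  n.inHead = false ∧ ∃ v ∈ n.rule.frontierVars, n.term = Term.var v

/-- Edges of the basic position graph PG(𝓡): inside each rule, from each frontier
position of the body to each head position with the same term, and to each existential
position of the head. -/
def pgEdge (𝓡 : Set Rule) (n m : PosNode) : Prop :=
  n.valid 𝓡 ∧ m.valid 𝓡 ∧ n.rule = m.rule ∧ m.inHead = true ∧
  n.isFrontier ∧ (n.term = m.term ∨ m.isExistential)

/-- Shape of a transition edge: from the k-th position of an atom of a rule head to the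
k-th position of an atom with the same predicate of a rule body. -/
def transShape (𝓡 : Set Rule) (n m : PosNode) : Prop :=
  n.valid 𝓡 ∧ m.valid 𝓡 ∧ n.inHead = true ∧ m.inHead = false ∧
  n.atom.pred = m.atom.pred ∧ n.idx = m.idx

/-- The full position graph PG^F(𝓡): all transition edges are added. -/
def pgF (𝓡 : Set Rule) (n m : PosNode) : Prop :=
  pgEdge 𝓡 n m ∨ transShape 𝓡 n m

/-- The dependency position graph PG^D(𝓡): a transition edge is added only if the target
rule depends (directly or indirectly) on the source rule, i.e. there is a path in GRD(𝓡). -/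
def pgD (𝓡 : Set Rule) (n m : PosNode) : Prop :=
  pgEdge 𝓡 n m ∨ (transShape 𝓡 n m ∧ Relation.TransGen (grdEdge 𝓡) n.rule m.rule)

/-! ## Unifiers, piece-unifiers, agglomerated rules and PG^U -/

/-- A unifier of (part of) the body of `R₂` with (part of) the head of `R₁`. -/
def IsUnifier (R₁ R₂ : Rule) (μ : Subst) (H' B' : Set Atom) : Prop :=
  H' ⊆ R₁.headSet ∧ B' ⊆ R₂.bodySet ∧ Subst.set μ B' = Subst.set μ H'

/-- A separating variable of `B' ⊆ body(R₂)`: occurs both in `B'` and outside of `B'`. -/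
def SeparatingVar (R₂ : Rule) (B' : Set Atom) (x : ℕ) : Prop :=
  occursInSet x B' ∧ occursInSet x (R₂.bodySet \ B')

/-- A piece-unifier: a unifier such that no existential variable of `H'` is unified with a
separating variable of `B'`. -/
def IsPieceUnifier (R₁ R₂ : Rule) (μ : Subst) (H' B' : Set Atom) : Prop :=
  IsUnifier R₁ R₂ μ H' B' ∧
  ∀ x, SeparatingVar R₂ B' x →
    ∀ z ∈ R₁.existVars, occursInSet z H' →
      Subst.app μ (Term.var x) ≠ Subst.app μ (Term.var z)

def predOccursIn (p : ℕ) (R : Rule) : Prop :=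
  (∃ a ∈ R.body, a.pred = p) ∨ (∃ a ∈ R.head, a.pred = p)

/-- `IsPathRule 𝓡 fr Ri Rend S` : `S` is the rule `R^P` associated with a path `P`
from `Ri` to `Rend` in GRD(𝓡), built by accumulating `fr`-atoms on the unified terms,
where `fr` is a fresh unary predicate. -/
inductive IsPathRule (𝓡 : Set Rule) (fr : ℕ) (Ri : Rule) : Rule → Rule → Prop where
  | base : Ri ∈ 𝓡 → IsPathRule 𝓡 fr Ri Ri Ri
  | step (Rl S Rnext : Rule) (μ : Subst) (H' B' : Set Atom) (T : List Term) :
      IsPathRule 𝓡 fr Ri Rl S →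
      grdEdge 𝓡 Rl Rnext →
      IsPieceUnifier S Rnext μ H' B' →
      (∀ t, t ∈ T ↔ ∃ a ∈ H', t ∈ a.args) →
      IsPathRule 𝓡 fr Ri Rnext ⟨S.body ++ T.map (fun t => ⟨fr, [t]⟩), S.head⟩

/-- `A` is an agglomerated rule `R_i^j` associated with `(Ri,Rj)` : it gathers (by union of
bodies) the rules associated with a non-empty set of paths from `Ri` to direct
predecessors of `Rj` in GRD(𝓡); the predicate `fr` is fresh. -/
def IsAggRule (𝓡 : Set Rule) (fr : ℕ) (Ri Rj : Rule) (A : Rule) : Prop :=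
  (∀ R ∈ 𝓡, ¬ predOccursIn fr R) ∧
  ∃ L : List Rule, L ≠ [] ∧
    (∀ S ∈ L, ∃ Rend, IsPathRule 𝓡 fr Ri Rend S ∧ grdEdge 𝓡 Rend Rj) ∧
    A.head = Ri.head ∧ (∀ a, a ∈ A.body ↔ ∃ S ∈ L, a ∈ S.body)

/-- The position graph with unifiers PG^U(𝓡): a transition edge is added only if there is
a piece-unifier of the body of the target rule with the head of an agglomerated rule that
unifies the terms in the two positions. -/
def pgU (𝓡 : Set Rule) (n m : PosNode) : Prop :=
  pgEdge 𝓡 n m ∨ (transShape 𝓡 n m ∧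
    ∃ fr A μ H' B', IsAggRule 𝓡 fr n.rule m.rule A ∧
      IsPieceUnifier A m.rule μ H' B' ∧
      Subst.app μ m.term = Subst.app μ n.term)

/-! ## Acyclicity properties via marking functions -/

abbrev PosGraph := PosNode → PosNode → Prop

/-- An acyclicity property, given by a marking function that assigns to each node of a
position graph a subset of its (direct or indirect) successors. -/
structure AcyclicityProperty where
  mark : PosGraph → PosNode → Set PosNode
  mark_subset : ∀ E n m, m ∈ mark E n → Relation.TransGen E n m

/-- A cycle in a position graph, given as a non-empty list of nodes that are consecutively
linked by edges, including an edge from the last node back to the first one. -/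
def IsCycle (E : PosGraph) : List PosNode → Prop
  | [] => False
  | a :: l => List.Chain E a l ∧ E ((a :: l).getLast (List.cons_ne_nil a l)) a

/-- A marked cycle for `n` w.r.t. the marking of `Y`: a cycle through `n` all of whose
nodes belong to the marking of `n`. -/
def MarkedCycle (Y : AcyclicityProperty) (E : PosGraph) (n : PosNode) (c : List PosNode) :
    Prop :=
  IsCycle E c ∧ n ∈ c ∧ ∀ m ∈ c, m ∈ Y.mark E n

/-- The position graph `E` satisfies the acyclicity property `Y`: there is no marked cycle
for an existential position. -/
def SatisfiesOn (Y : AcyclicityProperty) (E : PosGraph) : Prop :=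
  ¬ ∃ n c, n.isExistential ∧ MarkedCycle Y E n c

/-- `𝓡` satisfies the acyclicity property `Y` (checked on the full position graph). -/
def SatisfiesY (Y : AcyclicityProperty) (𝓡 : Set Rule) : Prop := SatisfiesOn Y (pgF 𝓡)

/-- `𝓡` satisfies `Y^D` (the acyclicity property `Y` checked on PG^D(𝓡)). -/
def SatisfiesYD (Y : AcyclicityProperty) (𝓡 : Set Rule) : Prop := SatisfiesOn Y (pgD 𝓡)

/-- `𝓡` satisfies `Y^U` (the acyclicity property `Y` checked on PG^U(𝓡)). -/
def SatisfiesYU (Y : AcyclicityProperty) (𝓡 : Set Rule) : Prop := SatisfiesOn Y (pgU 𝓡)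

/-! ## Compatible unifiers -/

/-- A path in a position graph whose nodes (after the starting one) avoid existential
positions. -/
inductive AvoidExistPath (E : PosGraph) : PosNode → PosNode → Prop where
  | refl (n : PosNode) : AvoidExistPath E n n
  | tail {n m m' : PosNode} : AvoidExistPath E n m → E m m' → ¬ m'.isExistential →
      AvoidExistPath E n m'

/-- A compatible unifier of the body of `R₂` with the head of `R₁` (w.r.t. PG^U(𝓡)):
for each position `[a,i]` of `B'` whose term is sent by `μ` to an existential variable `z`
occurring in `H'`, PG^U(𝓡) contains a path from a position in which `z` occurs to `[a,i]`
that does not go through another existential position. -/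
def CompatibleUnifier (𝓡 : Set Rule) (R₁ R₂ : Rule) (μ : Subst) (H' B' : Set Atom) :
    Prop :=
  IsUnifier R₁ R₂ μ H' B' ∧
  ∀ (a : Atom) (i : ℕ), a ∈ B' → i < a.args.length →
    ∀ z ∈ R₁.existVars, occursInSet z H' →
      Subst.app μ (a.args.getD i default) = Term.var z →
      ∃ n₀ : PosNode, n₀.rule = R₁ ∧ n₀.inHead = true ∧ n₀.term = Term.var z ∧
        AvoidExistPath (pgU 𝓡) n₀ ⟨R₂, false, a, i⟩

theorem IsPathRule.reflTransGen_grdEdge {𝓡 : Set Rule} {fr : ℕ} {Ri Rend S : Rule}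
    (h : IsPathRule 𝓡 fr Ri Rend S) : Relation.ReflTransGen (grdEdge 𝓡) Ri Rend := by
  induction h with
  | base _ => exact .refl
  | step _ _ _ _ _ _ _ _ hgrd _ _ ih => exact ih.tail hgrd

theorem IsAggRule.transGen_grdEdge {𝓡 : Set Rule} {fr : ℕ} {Ri Rj A : Rule}
    (h : IsAggRule 𝓡 fr Ri Rj A) : Relation.TransGen (grdEdge 𝓡) Ri Rj := by
  obtain ⟨-, L, hL, hpaths, -⟩ := h
  obtain ⟨S, hS⟩ := List.exists_mem_of_ne_nil L hL
  obtain ⟨Rend, hpath, hgrd⟩ := hpaths S hS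
  exact .tail' hpath.reflTransGen_grdEdge hgrd

theorem pgD_of_pgU {𝓡 : Set Rule} {n m : PosNode} (h : pgU 𝓡 n m) : pgD 𝓡 n m := by
  rcases h with h | ⟨hshape, _, _, _, _, _, hagg, -⟩
  · exact .inl h
  · exact .inr ⟨hshape, hagg.transGen_grdEdge⟩

theorem pgF_of_pgD {𝓡 : Set Rule} {n m : PosNode} (h : pgD 𝓡 n m) : pgF 𝓡 n m :=
  h.imp_right And.left

theorem pgD_of_pgF_of_transGen_complete {𝓡 : Set Rule}
    (hcomplete : ∀ Ri ∈ 𝓡, ∀ Rj ∈ 𝓡, Relation.TransGen (grdEdge 𝓡) Ri Rj)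
    {n m : PosNode} (h : pgF 𝓡 n m) : pgD 𝓡 n m :=
  h.imp_right fun hshape => ⟨hshape, hcomplete _ hshape.1.1 _ hshape.2.1.1⟩

/-- For every set of existential rules 𝓡, the edge set of PG^U(𝓡) is
contained in that of PG^D(𝓡), which is contained in that of PG^F(𝓡); moreover, if the
transitive closure of GRD(𝓡) is a complete graph, then PG^D(𝓡) = PG^F(𝓡). -/
theorem position_graph_inclusions (𝓡 : Set Rule) :
    (∀ n m : PosNode, pgU 𝓡 n m → pgD 𝓡 n m) ∧
    (∀ n m : PosNode, pgD 𝓡 n m → pgF 𝓡 n m) ∧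
    ((∀ Ri ∈ 𝓡, ∀ Rj ∈ 𝓡, Relation.TransGen (grdEdge 𝓡) Ri Rj) →
      ∀ n m : PosNode, pgD 𝓡 n m ↔ pgF 𝓡 n m) :=
  ⟨fun _ _ => pgD_of_pgU, fun _ _ => pgF_of_pgD,
    fun hcomplete _ _ => ⟨pgF_of_pgD, pgD_of_pgF_of_transGen_complete hcomplete⟩⟩
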